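/- Fix partitions λ, μ⁰,...,μᵏ of n and a permutation σ_λ ∈ S_{2n} with σ_λ·ε = δ_λ. Then the map ψ sending (σ₀,...,σ_k) ∈ E := {(σ₀,...,σ_k) ∈ K_{μ⁰}×⋯×K_{μᵏ} : σ₀⋯σ_k·ε = δ_λ} to (σ₀·ε, σ₀σ₁·ε, ..., σ₀⋯σ_{k−1}·ε) is a surjection from E onto F^λ_{μ⁰,...,μᵏ} with every fiber of cardinality |B_n|^{k+1}. Consequently |F^λ_{μ⁰,...,μᵏ}| = a^λ_{μ⁰,...,μᵏ}/|B_n|^k, where a^λ_{μ⁰,...,μᵏ} is the structure constant defined by K_{μ⁰}⋯K_{μᵏ} = Σ_λ a^λ_{μ⁰,...,μᵏ} K_λ in the group algebra of S_{2n}. -/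

import Mathlib

open scoped Classical

noncomputable section

/-- A perfect matching, encoded as a fixed-point-free involution. -/
def IsMatching {α : Type*} (f : Equiv.Perm α) : Prop :=
  ∀ x, f x ≠ x ∧ f (f x) = x

/-- Cycle type including fixed points; for matchings `δ₁,δ₂`,
`Λ(δ₁,δ₂) = λ` iff `fullCycleType (δ₁ * δ₂) = λ + λ`. -/
def fullCycleType {α : Type*} [Fintype α] [DecidableEq α] (f : Equiv.Perm α) : Multiset ℕ :=
  f.cycleType + Multiset.replicate (Fintype.card α - f.cycleType.sum) 1

/-- The matching `ε = {{1,1̂},…,{n,n̂}}` on `A_n = Fin n ⊕ Fin n`. -/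
def epsilonPerm (n : ℕ) : Equiv.Perm (Fin n ⊕ Fin n) := Equiv.sumComm (Fin n) (Fin n)

/-- `σ ∈ K_μ`: the coset-type of `σ` (i.e. `Λ(ε, σ·ε)`) equals `μ`. -/
def InK (n : ℕ) (μ : Multiset ℕ) (σ : Equiv.Perm (Fin n ⊕ Fin n)) : Prop :=
  fullCycleType (epsilonPerm n * (σ * epsilonPerm n * σ⁻¹)) = μ + μ

/-- The element `K_μ = Σ_{σ ∈ K_μ} σ` of the group algebra `ℂ S_{2n}`. -/
def Kelt (n : ℕ) (μ : Multiset ℕ) : MonoidAlgebra ℂ (Equiv.Perm (Fin n ⊕ Fin n)) :=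
  ∑ σ : Equiv.Perm (Fin n ⊕ Fin n),
    if InK n μ σ then MonoidAlgebra.single σ (1 : ℂ) else 0

/-- The set `E` of tuples `(σ₀,…,σ_k) ∈ K_{μ⁰} × ⋯ × K_{μᵏ}` with
`σ₀⋯σ_k · ε = δ_λ`. -/
def Econd (n k : ℕ) (mus : Fin (k + 1) → Nat.Partition n)
    (dl : Equiv.Perm (Fin n ⊕ Fin n))
    (σs : Fin (k + 1) → Equiv.Perm (Fin n ⊕ Fin n)) : Prop :=
  (∀ i, InK n (mus i).parts (σs i)) ∧
    (List.ofFn σs).prod * epsilonPerm n * ((List.ofFn σs).prod)⁻¹ = dl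

/-- The map `ψ : (σ₀,…,σ_k) ↦ (σ₀·ε, σ₀σ₁·ε, …, σ₀⋯σ_{k−1}·ε)`. -/
def psiMap (n k : ℕ) (σs : Fin (k + 1) → Equiv.Perm (Fin n ⊕ Fin n)) :
    Fin k → Equiv.Perm (Fin n ⊕ Fin n) :=
  fun i =>
    ((List.ofFn σs).take (i.1 + 1)).prod * epsilonPerm n *
      (((List.ofFn σs).take (i.1 + 1)).prod)⁻¹

/-- The chain `ε, δ₀, …, δ_{k−1}, δ_λ`. -/
def chain (n k : ℕ) (dl : Equiv.Perm (Fin n ⊕ Fin n))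
    (δs : Fin k → Equiv.Perm (Fin n ⊕ Fin n)) : Fin (k + 2) → Equiv.Perm (Fin n ⊕ Fin n) :=
  Fin.cons (epsilonPerm n) (Fin.snoc δs dl)

/-- Membership in `F^λ_{μ⁰,…,μᵏ}`: a `k`-tuple of matchings `(δ₀,…,δ_{k−1})`
with `Λ(ε,δ₀)=μ⁰`, `Λ(δ_{i−1},δ_i)=μⁱ` and `Λ(δ_{k−1},δ_λ)=μᵏ`. -/
def Fcond (n k : ℕ) (mus : Fin (k + 1) → Nat.Partition n)
    (dl : Equiv.Perm (Fin n ⊕ Fin n))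
    (δs : Fin k → Equiv.Perm (Fin n ⊕ Fin n)) : Prop :=
  (∀ i, IsMatching (δs i)) ∧
    ∀ i : Fin (k + 1),
      fullCycleType (chain n k dl δs i.castSucc * chain n k dl δs i.succ)
        = (mus i).parts + (mus i).parts

/-! ### Auxiliary material -/

abbrev Gp (n : ℕ) := Equiv.Perm (Fin n ⊕ Fin n)

section AuxA
variable {n : ℕ}

lemma eps_matching : IsMatching (epsilonPerm n) := by
  intro x
  cases x <;> simp [epsilonPerm]

lemma matching_conj {δ τ : Gp n} (h : IsMatching δ) : IsMatching (τ * δ * τ⁻¹) := by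
  intro x
  constructor
  · intro hx
    simp only [Equiv.Perm.mul_apply] at hx
    have := congrArg (⇑τ⁻¹) hx
    simp only [Equiv.Perm.inv_def, Equiv.symm_apply_apply] at this
    exact (h (τ⁻¹ x)).1 this
  · simp only [Equiv.Perm.mul_apply, Equiv.Perm.inv_def, Equiv.symm_apply_apply,
      Equiv.apply_symm_apply]
    rw [← Equiv.Perm.inv_def, (h (τ⁻¹ x)).2, Equiv.Perm.inv_def, Equiv.apply_symm_apply]

lemma fullCycleType_conj {f τ : Gp n} : fullCycleType (τ * f * τ⁻¹) = fullCycleType f := by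
  unfold fullCycleType
  rw [Equiv.Perm.cycleType_conj]

lemma matching_cycleType (hn : 1 ≤ n) {f : Gp n} (hf : IsMatching f) :
    f.cycleType = Multiset.replicate n 2 := by
  have hsq : f ^ 2 = 1 := by
    ext x
    simp [sq, Equiv.Perm.mul_apply, (hf x).2]
  have hne : f ≠ 1 := by
    intro h
    exact (hf (Sum.inl ⟨0, hn⟩)).1 (by rw [h]; rfl)
  have horder : orderOf f = 2 := orderOf_eq_prime hsq hne
  obtain ⟨m, hm⟩ := Equiv.Perm.cycleType_prime_order (by rw [horder]; exact Nat.prime_two)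
  rw [horder] at hm
  have hsupp : f.support = Finset.univ := by
    apply Finset.eq_univ_iff_forall.2
    intro x
    exact Equiv.Perm.mem_support.2 (hf x).1
  have hsum : f.cycleType.sum = n + n := by
    rw [Equiv.Perm.sum_cycleType, hsupp]
    simp [Fintype.card_sum]
  rw [hm, Multiset.sum_replicate, smul_eq_mul] at hsum
  have : m + 1 = n := by omega
  rw [hm, this]

lemma conj_exists (hn : 1 ≤ n) {δ : Gp n} (hd : IsMatching δ) :
    ∃ ρ : Gp n, ρ * epsilonPerm n * ρ⁻¹ = δ := by
  have h1 : (epsilonPerm n).cycleType = δ.cycleType := by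
    rw [matching_cycleType hn eps_matching, matching_cycleType hn hd]
  exact isConj_iff.mp (Equiv.Perm.isConj_of_cycleType_eq h1)

end AuxA

section AuxB
variable {n : ℕ}

/-- The `flip` permutation determined by a vector of bits. -/
def flipPerm (b : Fin n → Bool) : Gp n where
  toFun x := match x with
    | Sum.inl i => if b i then Sum.inr i else Sum.inl i
    | Sum.inr i => if b i then Sum.inl i else Sum.inr i
  invFun x := match x with
    | Sum.inl i => if b i then Sum.inr i else Sum.inl i
    | Sum.inr i => if b i then Sum.inl i else Sum.inr i
  left_inv x := by
    cases x with
    | inl i => by_cases h : b i <;> simp [h]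
    | inr i => by_cases h : b i <;> simp [h]
  right_inv x := by
    cases x with
    | inl i => by_cases h : b i <;> simp [h]
    | inr i => by_cases h : b i <;> simp [h]

/-- Parametrization of the hyperoctahedral group. -/
def Phi (pb : Equiv.Perm (Fin n) × (Fin n → Bool)) : Gp n :=
  (Equiv.sumCongr pb.1 pb.1) * flipPerm pb.2

lemma Phi_apply_inl (pb : Equiv.Perm (Fin n) × (Fin n → Bool)) (i : Fin n) :
    Phi pb (Sum.inl i) = if pb.2 i then Sum.inr (pb.1 i) else Sum.inl (pb.1 i) := by
  by_cases h : pb.2 i <;> simp [Phi, flipPerm, Equiv.Perm.mul_apply, h]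

lemma Phi_apply_inr (pb : Equiv.Perm (Fin n) × (Fin n → Bool)) (i : Fin n) :
    Phi pb (Sum.inr i) = if pb.2 i then Sum.inl (pb.1 i) else Sum.inr (pb.1 i) := by
  by_cases h : pb.2 i <;> simp [Phi, flipPerm, Equiv.Perm.mul_apply, h]

lemma Phi_comm (pb : Equiv.Perm (Fin n) × (Fin n → Bool)) :
    Phi pb * epsilonPerm n = epsilonPerm n * Phi pb := by
  ext x
  cases x with
  | inl i =>
      simp only [Equiv.Perm.mul_apply, epsilonPerm, Equiv.sumComm_apply, Sum.swap_inl,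
        Phi_apply_inl, Phi_apply_inr]
      by_cases h : pb.2 i <;> simp [h]
  | inr i =>
      simp only [Equiv.Perm.mul_apply, epsilonPerm, Equiv.sumComm_apply, Sum.swap_inr,
        Phi_apply_inl, Phi_apply_inr]
      by_cases h : pb.2 i <;> simp [h]

lemma Phi_injective : Function.Injective (Phi (n := n)) := by
  intro pb pb' h
  have hpt : ∀ i, Phi pb (Sum.inl i) = Phi pb' (Sum.inl i) := fun i => by rw [h]
  have hb : pb.2 = pb'.2 := by
    funext i
    have := hpt i
    rw [Phi_apply_inl, Phi_apply_inl] at this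
    by_cases h1 : pb.2 i <;> by_cases h2 : pb'.2 i <;> simp [h1, h2] at this ⊢
  have hp : pb.1 = pb'.1 := by
    apply Equiv.ext
    intro i
    have := hpt i
    rw [Phi_apply_inl, Phi_apply_inl, ← hb] at this
    by_cases h1 : pb.2 i <;> simp [h1] at this <;> exact this
  exact Prod.ext hp hb

lemma Phi_surjective {τ : Gp n} (hc : τ * epsilonPerm n = epsilonPerm n * τ) :
    ∃ pb, Phi pb = τ := by
  have hcx : ∀ x, τ (epsilonPerm n x) = epsilonPerm n (τ x) := by
    intro x
    have := congrFun (congrArg (fun (g : Gp n) => (g : Fin n ⊕ Fin n → Fin n ⊕ Fin n)) hc) x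
    simpa [Equiv.Perm.mul_apply] using this
  have key : ∀ i, τ (Sum.inr i) = epsilonPerm n (τ (Sum.inl i)) := by
    intro i
    have := hcx (Sum.inl i)
    simpa [epsilonPerm] using this
  set p : Fin n → Fin n := fun i => Sum.elim id id (τ (Sum.inl i)) with hp
  have pinj : Function.Injective p := by
    intro i j hij
    rcases h1 : τ (Sum.inl i) with a | a <;> rcases h2 : τ (Sum.inl j) with c | c
    · rw [hp] at hij; simp only [h1, h2, Sum.elim_inl, id] at hij
      subst hij
      have := τ.injective (h1.trans h2.symm); simpa using this
    · rw [hp] at hij; simp only [h1, h2, Sum.elim_inl, Sum.elim_inr, id] at hij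
      subst hij
      have h3 : τ (Sum.inr j) = Sum.inl a := by rw [key j, h2]; rfl
      have := τ.injective (h1.trans h3.symm); simp at this
    · rw [hp] at hij; simp only [h1, h2, Sum.elim_inl, Sum.elim_inr, id] at hij
      subst hij
      have h3 : τ (Sum.inr i) = Sum.inl a := by rw [key i, h1]; rfl
      have := τ.injective (h3.trans h2.symm); simp at this
    · rw [hp] at hij; simp only [h1, h2, Sum.elim_inr, id] at hij
      subst hij
      have := τ.injective (h1.trans h2.symm); simpa using this
  refine ⟨⟨Equiv.ofBijective p (Finite.injective_iff_bijective.mp pinj),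
    fun i => (τ (Sum.inl i)).isRight⟩, ?_⟩
  ext x
  cases x with
  | inl i =>
      rw [Phi_apply_inl]
      rcases h1 : τ (Sum.inl i) with a | a
      · simp [Equiv.ofBijective, h1, hp]
      · simp [Equiv.ofBijective, h1, hp]
  | inr i =>
      rw [Phi_apply_inr]
      have h2 := key i
      rcases h1 : τ (Sum.inl i) with a | a
      · rw [h1] at h2
        simp [Equiv.ofBijective, h1, hp, h2, epsilonPerm]
      · rw [h1] at h2
        simp [Equiv.ofBijective, h1, hp, h2, epsilonPerm]

lemma card_centralizer :
    Nat.card {τ : Gp n // τ * epsilonPerm n = epsilonPerm n * τ}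
      = n.factorial * 2 ^ n := by
  have hbij : Function.Bijective
      (fun pb : Equiv.Perm (Fin n) × (Fin n → Bool) =>
        (⟨Phi pb, Phi_comm pb⟩ : {τ : Gp n // τ * epsilonPerm n = epsilonPerm n * τ})) := by
    constructor
    · intro a b h
      exact Phi_injective (congrArg Subtype.val h)
    · rintro ⟨τ, hτ⟩
      obtain ⟨pb, hpb⟩ := Phi_surjective hτ
      exact ⟨pb, Subtype.ext hpb⟩
  rw [← Nat.card_eq_of_bijective _ hbij]
  simp [Nat.card_eq_fintype_card, Fintype.card_perm]

lemma card_transporter (hn : 1 ≤ n) {δ : Gp n} (hd : IsMatching δ) :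
    Nat.card {τ : Gp n // τ * epsilonPerm n * τ⁻¹ = δ} = n.factorial * 2 ^ n := by
  obtain ⟨ρ, hρ⟩ := conj_exists hn hd
  have e1 : {τ : Gp n // τ * epsilonPerm n * τ⁻¹ = δ}
      ≃ {τ : Gp n // τ * epsilonPerm n * τ⁻¹ = epsilonPerm n} := by
    refine Equiv.subtypeEquiv (Equiv.mulLeft ρ⁻¹) ?_
    intro τ
    simp only [Equiv.coe_mulLeft]
    constructor
    · intro h
      have : ρ⁻¹ * (τ * epsilonPerm n * τ⁻¹) * ρ = ρ⁻¹ * δ * ρ := by rw [h]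
      rw [← hρ] at this
      calc ρ⁻¹ * τ * epsilonPerm n * (ρ⁻¹ * τ)⁻¹
          = ρ⁻¹ * (τ * epsilonPerm n * τ⁻¹) * ρ := by group
        _ = ρ⁻¹ * (ρ * epsilonPerm n * ρ⁻¹) * ρ := this
        _ = epsilonPerm n := by group
    · intro h
      have h2 : ρ * (ρ⁻¹ * τ * epsilonPerm n * (ρ⁻¹ * τ)⁻¹) * ρ⁻¹
          = ρ * epsilonPerm n * ρ⁻¹ := by rw [h]
      rw [hρ] at h2
      calc τ * epsilonPerm n * τ⁻¹
          = ρ * (ρ⁻¹ * τ * epsilonPerm n * (ρ⁻¹ * τ)⁻¹) * ρ⁻¹ := by group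
        _ = δ := h2
  have e2 : {τ : Gp n // τ * epsilonPerm n * τ⁻¹ = epsilonPerm n}
      ≃ {τ : Gp n // τ * epsilonPerm n = epsilonPerm n * τ} := by
    refine Equiv.subtypeEquiv (Equiv.refl _) ?_
    intro τ
    simp only [Equiv.refl_apply]
    rw [mul_inv_eq_iff_eq_mul]
  rw [Nat.card_congr (e1.trans e2), card_centralizer]

end AuxB

section AuxC
variable {n m k : ℕ}

/-- Partial products. -/
def Tp (σs : Fin m → Gp n) (j : ℕ) : Gp n := ((List.ofFn σs).take j).prod

lemma Tp_zero (σs : Fin m → Gp n) : Tp σs 0 = 1 := by simp [Tp]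

lemma Tp_succ (σs : Fin m → Gp n) {j : ℕ} (h : j < m) :
    Tp σs (j + 1) = Tp σs j * σs ⟨j, h⟩ := by
  unfold Tp
  rw [List.prod_take_succ _ _ (by simpa using h)]
  congr 1
  rw [List.getElem_ofFn]

lemma Tp_full (σs : Fin m → Gp n) : Tp σs m = (List.ofFn σs).prod := by
  unfold Tp
  rw [List.take_of_length_le (by simp)]

/-- Conjugates of `ε` along partial products. -/
def cTp (σs : Fin m → Gp n) (j : ℕ) : Gp n :=
  Tp σs j * epsilonPerm n * (Tp σs j)⁻¹

lemma cTp_zero (σs : Fin m → Gp n) : cTp σs 0 = epsilonPerm n := by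
  simp [cTp, Tp_zero]

/-- Successive quotients. -/
def phib (τs : Fin (k + 1) → Gp n) : Fin (k + 1) → Gp n :=
  fun i => (Fin.cases 1 (fun j => τs j.castSucc) i)⁻¹ * τs i

lemma Tp_phib (τs : Fin (k + 1) → Gp n) : ∀ (j : ℕ) (h : j < k + 1),
    Tp (phib τs) (j + 1) = τs ⟨j, h⟩ := by
  intro j
  induction j with
  | zero =>
      intro h
      rw [Tp_succ _ (by omega), Tp_zero, one_mul]
      show phib τs ⟨0, h⟩ = _
      rw [show (⟨0, h⟩ : Fin (k+1)) = 0 from rfl]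
      simp [phib]
  | succ j ih =>
      intro h
      rw [Tp_succ _ (by omega), ih (by omega)]
      show τs ⟨j, _⟩ * phib τs ⟨j + 1, h⟩ = _
      unfold phib
      rw [show (⟨j + 1, h⟩ : Fin (k+1)) = Fin.succ ⟨j, by omega⟩ from rfl]
      rw [Fin.cases_succ, Fin.castSucc_mk]
      rw [mul_inv_cancel_left]

/-- Partial products as a tuple. -/
def phif (σs : Fin (k + 1) → Gp n) : Fin (k + 1) → Gp n :=
  fun i => Tp σs (i.1 + 1)

lemma phib_phif (σs : Fin (k + 1) → Gp n) : phib (phif σs) = σs := by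
  funext i
  induction i using Fin.cases with
  | zero =>
      unfold phib
      rw [Fin.cases_zero, inv_one, one_mul]
      show Tp σs (0 + 1) = _
      rw [Tp_succ _ (by omega), Tp_zero, one_mul]
      rfl
  | succ j =>
      unfold phib
      rw [Fin.cases_succ]
      show (Tp σs (j.castSucc.1 + 1))⁻¹ * Tp σs (j.succ.1 + 1) = σs j.succ
      rw [Fin.coe_castSucc, Fin.val_succ, Tp_succ σs (show j.1 + 1 < k + 1 by omega)]
      rw [inv_mul_cancel_left]
      congr 1

lemma phif_phib (τs : Fin (k + 1) → Gp n) : phif (phib τs) = τs := by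
  funext i
  show Tp (phib τs) (i.1 + 1) = τs i
  rw [Tp_phib τs i.1 i.isLt]

end AuxC

section AuxD
variable {n : ℕ}

/-- Indicator element of the group algebra. -/
def KF (n : ℕ) (P : Gp n → Prop) : MonoidAlgebra ℂ (Gp n) :=
  ∑ σ : Gp n, if P σ then MonoidAlgebra.single σ (1 : ℂ) else 0

lemma mycard_sigma {ι : Type*} [Fintype ι] (f : ι → Type*) [∀ i, Fintype (f i)] :
    Nat.card (Σ i, f i) = ∑ i, Nat.card (f i) := by
  simp [Nat.card_eq_fintype_card]

lemma KF_apply (P : Gp n → Prop) (τ : Gp n) :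
    (KF n P).coeff τ = if P τ then 1 else 0 := by
  unfold KF
  rw [MonoidAlgebra.coeff_sum, Finset.sum_apply']
  have : ∀ σ : Gp n,
      (if P σ then MonoidAlgebra.single σ (1:ℂ) else 0).coeff τ
        = if σ = τ then (if P σ then 1 else 0) else 0 := by
    intro σ
    by_cases h2 : σ = τ
    · subst h2
      by_cases h : P σ <;> simp [h, MonoidAlgebra.coeff_single_apply]
    · by_cases h : P σ <;> simp [h, h2, MonoidAlgebra.coeff_single_apply]
  rw [Finset.sum_congr rfl fun σ _ => this σ, Finset.sum_ite_eq' Finset.univ τ]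
  simp

lemma KF_mul_apply (P : Gp n → Prop) (f : MonoidAlgebra ℂ (Gp n)) (g : Gp n) :
    (KF n P * f).coeff g = ∑ σ : Gp n, if P σ then f.coeff (σ⁻¹ * g) else 0 := by
  unfold KF
  rw [Finset.sum_mul, MonoidAlgebra.coeff_sum, Finset.sum_apply']
  refine Finset.sum_congr rfl fun σ _ => ?_
  by_cases h : P σ <;> simp [h, MonoidAlgebra.coeff_single_mul_apply]

lemma coeff_prod (m : ℕ) (P : Fin (m + 1) → Gp n → Prop) (g : Gp n) :
    ((List.ofFn fun i => KF n (P i)).prod).coeff g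
      = (Nat.card {σs : Fin (m + 1) → Gp n //
          (∀ i, P i (σs i)) ∧ (List.ofFn σs).prod = g} : ℂ) := by
  induction m generalizing g with
  | zero =>
      rw [List.ofFn_succ]
      simp only [List.ofFn_zero, List.prod_cons, List.prod_nil, mul_one]
      rw [KF_apply]
      have e1 : {σs : Fin 1 → Gp n // (∀ i, P i (σs i)) ∧ (List.ofFn σs).prod = g}
          ≃ {x : Gp n // P 0 x ∧ x = g} := by
        refine ⟨fun σs => ⟨σs.1 0, σs.2.1 0, ?_⟩, fun x => ⟨fun _ => x.1, ?_, ?_⟩, ?_, ?_⟩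
        · have := σs.2.2
          simpa [List.ofFn_succ] using this
        · intro i
          have : i = 0 := Fin.fin_one_eq_zero i
          rw [this]; exact x.2.1
        · simp [List.ofFn_succ, x.2.2]
        · rintro ⟨σs, h⟩
          apply Subtype.ext
          funext i
          have : i = 0 := Fin.fin_one_eq_zero i
          rw [this]
        · rintro ⟨x, h⟩; rfl
      rw [Nat.card_congr e1]
      by_cases h : P 0 g
      · haveI : Unique {x : Gp n // P 0 x ∧ x = g} :=
          ⟨⟨⟨g, h, rfl⟩⟩, fun y => Subtype.ext y.2.2⟩
        simp [h, Nat.card_unique]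
      · haveI : IsEmpty {x : Gp n // P 0 x ∧ x = g} :=
          ⟨fun x => h (x.2.2 ▸ x.2.1)⟩
        simp [h]
  | succ m ih =>
      rw [List.ofFn_succ, List.prod_cons, KF_mul_apply]
      have e2 : {σs : Fin (m + 2) → Gp n // (∀ i, P i (σs i)) ∧ (List.ofFn σs).prod = g}
          ≃ Σ σ : Gp n, {σs' : Fin (m + 1) → Gp n //
              (P 0 σ ∧ ∀ i, P i.succ (σs' i)) ∧ (List.ofFn σs').prod = σ⁻¹ * g} := by
        refine ⟨fun σs => ⟨σs.1 0, Fin.tail σs.1, ⟨⟨σs.2.1 0, fun i => σs.2.1 i.succ⟩, ?_⟩⟩,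
          fun x => ⟨Fin.cons x.1 x.2.1, ⟨fun i => ?_, ?_⟩⟩, ?_, ?_⟩
        · have := σs.2.2
          rw [List.ofFn_succ, List.prod_cons] at this
          rw [show List.ofFn (Fin.tail σs.1) = List.ofFn fun i => σs.1 i.succ from rfl]
          exact eq_inv_mul_iff_mul_eq.mpr this
        · induction i using Fin.cases with
          | zero => rw [Fin.cons_zero]; exact x.2.2.1.1
          | succ j => rw [Fin.cons_succ]; exact x.2.2.1.2 j
        · rw [List.ofFn_succ, List.prod_cons]
          simp only [Fin.cons_zero, Fin.cons_succ]
          rw [show (List.ofFn fun i : Fin (m + 1) => x.2.1 i) = List.ofFn x.2.1 from rfl,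
            x.2.2.2, mul_inv_cancel_left]
        · rintro ⟨σs, h⟩
          apply Subtype.ext
          exact Fin.cons_self_tail σs
        · rintro ⟨σ, σs', h⟩
          rfl
      rw [Nat.card_congr e2, mycard_sigma, Nat.cast_sum]
      refine Finset.sum_congr rfl fun σ _ => ?_
      by_cases h : P 0 σ
      · rw [if_pos h, ih (fun i => P i.succ) (σ⁻¹ * g)]
        congr 1
        apply Nat.card_congr
        refine Equiv.subtypeEquivRight fun σs' => ?_
        simp [h]
      · rw [if_neg h]
        haveI : IsEmpty {σs' : Fin (m + 1) → Gp n //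
            (P 0 σ ∧ ∀ i, P i.succ (σs' i)) ∧ (List.ofFn σs').prod = σ⁻¹ * g} :=
          ⟨fun x => h x.2.1.1⟩
        rw [Nat.card_of_isEmpty, Nat.cast_zero]

end AuxD

section AuxE
variable {n k : ℕ}

lemma InK_iff {m : ℕ} (σs : Fin m → Gp n) {j : ℕ} (h : j < m) (μ : Multiset ℕ) :
    InK n μ (σs ⟨j, h⟩) ↔ fullCycleType (cTp σs j * cTp σs (j + 1)) = μ + μ := by
  unfold InK
  have hT : cTp σs j * cTp σs (j + 1)
      = Tp σs j * (epsilonPerm n * (σs ⟨j, h⟩ * epsilonPerm n * (σs ⟨j, h⟩)⁻¹))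
          * (Tp σs j)⁻¹ := by
    unfold cTp
    rw [Tp_succ σs h]
    group
  rw [hT, fullCycleType_conj]

lemma chain_zero (dl : Gp n) (δs : Fin k → Gp n) :
    chain n k dl δs 0 = epsilonPerm n := by
  simp [chain]

lemma chain_succ (dl : Gp n) (δs : Fin k → Gp n) (i : Fin (k + 1)) :
    chain n k dl δs i.succ = (Fin.snoc δs dl : Fin (k + 1) → Gp n) i := by
  simp [chain]

lemma chain_bridge (mus : Fin (k + 1) → Nat.Partition n) (dl : Gp n)
    (σs : Fin (k + 1) → Gp n) (δs : Fin k → Gp n)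
    (hch : ∀ j : Fin (k + 2), chain n k dl δs j = cTp σs j.1) :
    (∀ i, InK n (mus i).parts (σs i)) ↔
      (∀ i : Fin (k + 1),
        fullCycleType (chain n k dl δs i.castSucc * chain n k dl δs i.succ)
          = (mus i).parts + (mus i).parts) := by
  apply forall_congr'
  intro i
  rw [hch i.castSucc, hch i.succ, Fin.coe_castSucc, Fin.val_succ]
  exact InK_iff σs i.isLt _

lemma hch_of_psi (dl : Gp n) (σs : Fin (k + 1) → Gp n)
    (hpr : (List.ofFn σs).prod * epsilonPerm n * ((List.ofFn σs).prod)⁻¹ = dl) :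
    ∀ j : Fin (k + 2), chain n k dl (psiMap n k σs) j = cTp σs j.1 := by
  intro j
  induction j using Fin.cases with
  | zero =>
      rw [chain_zero]
      rw [show ((0 : Fin (k + 2)) : ℕ) = 0 from rfl, cTp_zero]
  | succ i =>
      rw [chain_succ]
      induction i using Fin.lastCases with
      | last =>
          rw [Fin.snoc_last]
          show dl = cTp σs (k + 1)
          unfold cTp
          rw [Tp_full]
          exact hpr.symm
      | cast j' =>
          rw [Fin.snoc_castSucc]
          show psiMap n k σs j' = cTp σs (j'.1 + 1)
          rfl

lemma Fcond_psi (mus : Fin (k + 1) → Nat.Partition n) (dl : Gp n)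
    (σs : Fin (k + 1) → Gp n) (hE : Econd n k mus dl σs) :
    Fcond n k mus dl (psiMap n k σs) := by
  constructor
  · intro i
    show IsMatching (cTp σs (i.1 + 1))
    exact matching_conj eps_matching
  · exact (chain_bridge mus dl σs _ (hch_of_psi dl σs hE.2)).mp hE.1

lemma hch_of_tau (dl : Gp n) (δs : Fin k → Gp n) (τs : Fin (k + 1) → Gp n)
    (hτ : ∀ i, τs i * epsilonPerm n * (τs i)⁻¹ = (Fin.snoc δs dl : Fin (k + 1) → Gp n) i) :
    ∀ j : Fin (k + 2), chain n k dl δs j = cTp (phib τs) j.1 := by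
  intro j
  induction j using Fin.cases with
  | zero =>
      rw [chain_zero]
      rw [show ((0 : Fin (k + 2)) : ℕ) = 0 from rfl, cTp_zero]
  | succ i =>
      rw [chain_succ, ← hτ i]
      show τs i * epsilonPerm n * (τs i)⁻¹ = cTp (phib τs) (i.1 + 1)
      unfold cTp
      rw [Tp_phib τs i.1 i.isLt]

/-- The fiber bijection. -/
def fiberEquiv (mus : Fin (k + 1) → Nat.Partition n) (dl : Gp n) (δs : Fin k → Gp n)
    (hF : Fcond n k mus dl δs) :
    {τs : Fin (k + 1) → Gp n //
        ∀ i, τs i * epsilonPerm n * (τs i)⁻¹ = (Fin.snoc δs dl : Fin (k + 1) → Gp n) i}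
      ≃ {σs : Fin (k + 1) → Gp n // Econd n k mus dl σs ∧ psiMap n k σs = δs} where
  toFun τs := ⟨phib τs.1, by
    have hch := hch_of_tau dl δs τs.1 τs.2
    have hψ : psiMap n k (phib τs.1) = δs := by
      funext i
      show cTp (phib τs.1) (i.1 + 1) = δs i
      have hthis := hch (Fin.castSucc i).succ
      have h2 : (((Fin.castSucc i).succ : Fin (k + 2)) : ℕ) = i.1 + 1 := rfl
      rw [h2] at hthis
      rw [← hthis, chain_succ, Fin.snoc_castSucc]
    refine ⟨⟨?_, ?_⟩, hψ⟩
    · exact (chain_bridge mus dl (phib τs.1) δs hch).mpr hF.2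
    · have hthis := hch (Fin.last k).succ
      have h2 : (((Fin.last k).succ : Fin (k + 2)) : ℕ) = k + 1 := rfl
      rw [h2, chain_succ, Fin.snoc_last] at hthis
      unfold cTp at hthis
      rw [Tp_full] at hthis
      exact hthis.symm⟩
  invFun σs := ⟨phif σs.1, by
    intro i
    induction i using Fin.lastCases with
    | last =>
        rw [Fin.snoc_last]
        show Tp σs.1 (k + 1) * epsilonPerm n * (Tp σs.1 (k + 1))⁻¹ = dl
        rw [Tp_full]
        exact σs.2.1.2
    | cast j =>
        rw [Fin.snoc_castSucc]
        have := congrFun σs.2.2 j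
        rw [← this]
        rfl⟩
  left_inv τs := Subtype.ext (phif_phib τs.1)
  right_inv σs := Subtype.ext (phib_phif σs.1)

end AuxE

/-- `ψ` is a surjection from `E` onto `F^λ_{μ⁰,…,μᵏ}` whose fibers all have
cardinality `|B_n|^{k+1}`; consequently
`|F^λ_{μ⁰,…,μᵏ}| · |B_n|^k = a^λ_{μ⁰,…,μᵏ}`, where the structure constants `a`
are defined by `K_{μ⁰} ⋯ K_{μᵏ} = Σ_θ a^θ_{μ⁰,…,μᵏ} K_θ`. -/
theorem matchings_factorizations (n k : ℕ) (hn : 1 ≤ n) (hk : 1 ≤ k)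
    (mus : Fin (k + 1) → Nat.Partition n) (lamP : Nat.Partition n)
    (dl : Equiv.Perm (Fin n ⊕ Fin n)) (hd1 : IsMatching dl)
    (hd2 : fullCycleType (epsilonPerm n * dl) = lamP.parts + lamP.parts)
    (aco : Nat.Partition n → ℂ)
    (ha : (List.ofFn fun i : Fin (k + 1) => Kelt n (mus i).parts).prod
        = ∑ θ : Nat.Partition n, aco θ • Kelt n θ.parts) :
    Set.SurjOn (psiMap n k) {σs | Econd n k mus dl σs} {δs | Fcond n k mus dl δs} ∧
    (∀ δs, Fcond n k mus dl δs →
        Nat.card {σs : Fin (k + 1) → Equiv.Perm (Fin n ⊕ Fin n) //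
            Econd n k mus dl σs ∧ psiMap n k σs = δs}
          = (n.factorial * 2 ^ n) ^ (k + 1)) ∧
    (Nat.card {δs : Fin k → Equiv.Perm (Fin n ⊕ Fin n) // Fcond n k mus dl δs} : ℂ)
        * ((n.factorial * 2 ^ n : ℕ) : ℂ) ^ k = aco lamP := by
  have hsnoc_matching : ∀ (δs : Fin k → Gp n), Fcond n k mus dl δs →
      ∀ i : Fin (k + 1), IsMatching ((Fin.snoc δs dl : Fin (k + 1) → Gp n) i) := by
    intro δs hF i
    induction i using Fin.lastCases with
    | last => rw [Fin.snoc_last]; exact hd1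
    | cast j => rw [Fin.snoc_castSucc]; exact hF.1 j
  -- fibers
  have hfib : ∀ δs, Fcond n k mus dl δs →
      Nat.card {σs : Fin (k + 1) → Gp n //
          Econd n k mus dl σs ∧ psiMap n k σs = δs}
        = (n.factorial * 2 ^ n) ^ (k + 1) := by
    intro δs hF
    rw [← Nat.card_congr (fiberEquiv mus dl δs hF)]
    rw [Nat.card_congr (Equiv.subtypePiEquivPi
      (p := fun (i : Fin (k + 1)) (τ : Gp n) =>
        τ * epsilonPerm n * τ⁻¹ = (Fin.snoc δs dl : Fin (k + 1) → Gp n) i))]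
    rw [Nat.card_pi]
    have : ∀ i : Fin (k + 1),
        Nat.card {τ : Gp n // τ * epsilonPerm n * τ⁻¹
            = (Fin.snoc δs dl : Fin (k + 1) → Gp n) i}
          = n.factorial * 2 ^ n := fun i => card_transporter hn (hsnoc_matching δs hF i)
    rw [Finset.prod_congr rfl fun i _ => this i, Finset.prod_const, Finset.card_univ,
      Fintype.card_fin]
  -- surjectivity
  have hsurj : Set.SurjOn (psiMap n k) {σs | Econd n k mus dl σs}
      {δs | Fcond n k mus dl δs} := by
    intro δs hδs
    have hF : Fcond n k mus dl δs := hδs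
    have hex : ∀ i : Fin (k + 1), ∃ ρ : Gp n,
        ρ * epsilonPerm n * ρ⁻¹ = (Fin.snoc δs dl : Fin (k + 1) → Gp n) i :=
      fun i => conj_exists hn (hsnoc_matching δs hF i)
    choose τs hτ using hex
    exact ⟨(fiberEquiv mus dl δs hF ⟨τs, hτ⟩).1,
      (fiberEquiv mus dl δs hF ⟨τs, hτ⟩).2.1, (fiberEquiv mus dl δs hF ⟨τs, hτ⟩).2.2⟩
  refine ⟨hsurj, hfib, ?_⟩
  -- the counting identity
  have key : ∀ τ : Gp n, τ * epsilonPerm n * τ⁻¹ = dl →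
      (Nat.card {σs : Fin (k + 1) → Gp n //
          (∀ i, InK n (mus i).parts (σs i)) ∧ (List.ofFn σs).prod = τ} : ℂ)
        = aco lamP := by
    intro τ hτ
    have hKelt : (List.ofFn fun i : Fin (k + 1) => Kelt n (mus i).parts)
        = List.ofFn fun i : Fin (k + 1) => KF n (fun σ => InK n (mus i).parts σ) := rfl
    have hLHS := coeff_prod k (fun i σ => InK n (mus i).parts σ) τ
    have hIu : ∀ θ : Nat.Partition n, InK n θ.parts τ ↔ θ = lamP := by
      intro θ
      have hlam : InK n lamP.parts τ := by
        unfold InK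
        rw [hτ]
        exact hd2
      constructor
      · intro h
        unfold InK at h
        have hdd : θ.parts + θ.parts = lamP.parts + lamP.parts := by
          rw [← h]
          unfold InK at hlam
          rw [hlam]
        apply Nat.Partition.ext
        rw [Multiset.ext]
        intro a
        have hc := congrArg (Multiset.count a) hdd
        rw [Multiset.count_add, Multiset.count_add] at hc
        omega
      · rintro rfl
        exact hlam
    have h2 : ((List.ofFn fun i : Fin (k + 1) => Kelt n (mus i).parts).prod).coeff τ
        = ∑ θ : Nat.Partition n, aco θ * (if InK n θ.parts τ then 1 else 0) := by
      rw [ha, MonoidAlgebra.coeff_sum, Finset.sum_apply']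
      refine Finset.sum_congr rfl fun θ _ => ?_
      rw [MonoidAlgebra.coeff_smul_apply]
      rw [show Kelt n θ.parts = KF n (InK n θ.parts) from rfl, KF_apply]
      simp [smul_eq_mul]
    calc (Nat.card {σs : Fin (k + 1) → Gp n //
            (∀ i, InK n (mus i).parts (σs i)) ∧ (List.ofFn σs).prod = τ} : ℂ)
        = ((List.ofFn fun i : Fin (k + 1) => Kelt n (mus i).parts).prod).coeff τ := by
          rw [hKelt, hLHS]
      _ = ∑ θ : Nat.Partition n, aco θ * (if InK n θ.parts τ then 1 else 0) := h2
      _ = ∑ θ : Nat.Partition n, (if θ = lamP then aco θ else 0) := by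
          refine Finset.sum_congr rfl fun θ _ => ?_
          rw [hIu θ]
          by_cases h : θ = lamP <;> simp [h]
      _ = aco lamP := by
          rw [Finset.sum_ite_eq' Finset.univ lamP aco]
          simp
  have hcard1 : Nat.card {σs : Fin (k + 1) → Gp n // Econd n k mus dl σs}
      = Nat.card {δs : Fin k → Gp n // Fcond n k mus dl δs}
          * (n.factorial * 2 ^ n) ^ (k + 1) := by
    set f1 : {σs : Fin (k + 1) → Gp n // Econd n k mus dl σs} →
        {δs : Fin k → Gp n // Fcond n k mus dl δs} :=
      fun σs => ⟨psiMap n k σs.1, Fcond_psi mus dl σs.1 σs.2⟩ with hf1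
    have inner : ∀ d : {δs : Fin k → Gp n // Fcond n k mus dl δs},
        {p : {σs : Fin (k + 1) → Gp n // Econd n k mus dl σs} // f1 p = d}
          ≃ {σs : Fin (k + 1) → Gp n // Econd n k mus dl σs ∧ psiMap n k σs = d.1} :=
      fun d =>
        { toFun := fun p => ⟨p.1.1, p.1.2, congrArg Subtype.val p.2⟩
          invFun := fun q => ⟨⟨q.1, q.2.1⟩, Subtype.ext q.2.2⟩
          left_inv := fun p => rfl
          right_inv := fun q => rfl }
    haveI : ∀ d : {δs : Fin k → Gp n // Fcond n k mus dl δs},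
        Fintype {p : {σs : Fin (k + 1) → Gp n // Econd n k mus dl σs} // f1 p = d} :=
      fun d => Fintype.ofFinite _
    calc Nat.card {σs : Fin (k + 1) → Gp n // Econd n k mus dl σs}
        = Nat.card (Σ d : {δs : Fin k → Gp n // Fcond n k mus dl δs},
            {p : {σs : Fin (k + 1) → Gp n // Econd n k mus dl σs} // f1 p = d}) :=
          (Nat.card_congr (Equiv.sigmaFiberEquiv f1)).symm
      _ = ∑ d : {δs : Fin k → Gp n // Fcond n k mus dl δs},
            Nat.card {p : {σs : Fin (k + 1) → Gp n // Econd n k mus dl σs} // f1 p = d} :=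
          mycard_sigma _
      _ = ∑ _d : {δs : Fin k → Gp n // Fcond n k mus dl δs},
            (n.factorial * 2 ^ n) ^ (k + 1) := by
          refine Finset.sum_congr rfl fun d _ => ?_
          rw [Nat.card_congr (inner d)]
          exact hfib d.1 d.2
      _ = Nat.card {δs : Fin k → Gp n // Fcond n k mus dl δs}
            * (n.factorial * 2 ^ n) ^ (k + 1) := by
          rw [Finset.sum_const, smul_eq_mul, Finset.card_univ, Fintype.card_eq_nat_card]
  have hcard2 : (Nat.card {σs : Fin (k + 1) → Gp n // Econd n k mus dl σs} : ℂ)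
      = ((n.factorial * 2 ^ n : ℕ) : ℂ) * aco lamP := by
    set f2 : {σs : Fin (k + 1) → Gp n // Econd n k mus dl σs} →
        {τ : Gp n // τ * epsilonPerm n * τ⁻¹ = dl} :=
      fun σs => ⟨(List.ofFn σs.1).prod, σs.2.2⟩ with hf2
    have inner : ∀ t : {τ : Gp n // τ * epsilonPerm n * τ⁻¹ = dl},
        {p : {σs : Fin (k + 1) → Gp n // Econd n k mus dl σs} // f2 p = t}
          ≃ {σs : Fin (k + 1) → Gp n //
              (∀ i, InK n (mus i).parts (σs i)) ∧ (List.ofFn σs).prod = t.1} :=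
      fun t =>
        { toFun := fun p => ⟨p.1.1, p.1.2.1, congrArg Subtype.val p.2⟩
          invFun := fun q => ⟨⟨q.1, q.2.1, by rw [q.2.2]; exact t.2⟩, Subtype.ext q.2.2⟩
          left_inv := fun p => rfl
          right_inv := fun q => rfl }
    haveI : ∀ t : {τ : Gp n // τ * epsilonPerm n * τ⁻¹ = dl},
        Fintype {p : {σs : Fin (k + 1) → Gp n // Econd n k mus dl σs} // f2 p = t} :=
      fun t => Fintype.ofFinite _
    calc (Nat.card {σs : Fin (k + 1) → Gp n // Econd n k mus dl σs} : ℂ)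
        = ((Nat.card (Σ t : {τ : Gp n // τ * epsilonPerm n * τ⁻¹ = dl},
              {p : {σs : Fin (k + 1) → Gp n // Econd n k mus dl σs} // f2 p = t}) : ℕ) : ℂ) := by
          rw [Nat.card_congr (Equiv.sigmaFiberEquiv f2)]
      _ = ∑ t : {τ : Gp n // τ * epsilonPerm n * τ⁻¹ = dl},
            ((Nat.card {p : {σs : Fin (k + 1) → Gp n // Econd n k mus dl σs} // f2 p = t}
                : ℕ) : ℂ) := by
          rw [mycard_sigma, Nat.cast_sum]
      _ = ∑ _t : {τ : Gp n // τ * epsilonPerm n * τ⁻¹ = dl}, aco lamP := by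
          refine Finset.sum_congr rfl fun t _ => ?_
          rw [Nat.card_congr (inner t)]
          exact key t.1 t.2
      _ = ((n.factorial * 2 ^ n : ℕ) : ℂ) * aco lamP := by
          rw [Finset.sum_const, Finset.card_univ, Fintype.card_eq_nat_card,
            card_transporter hn hd1]
          simp [smul_eq_mul]
  have hc0 : ((n.factorial * 2 ^ n : ℕ) : ℂ) ≠ 0 := by
    refine Nat.cast_ne_zero.mpr ?_
    positivity
  apply mul_left_cancel₀ hc0
  calc ((n.factorial * 2 ^ n : ℕ) : ℂ)
        * ((Nat.card {δs : Fin k → Gp n // Fcond n k mus dl δs} : ℂ)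
            * ((n.factorial * 2 ^ n : ℕ) : ℂ) ^ k)
      = (Nat.card {δs : Fin k → Gp n // Fcond n k mus dl δs} : ℂ)
          * ((n.factorial * 2 ^ n : ℕ) : ℂ) ^ (k + 1) := by ring
    _ = ((Nat.card {δs : Fin k → Gp n // Fcond n k mus dl δs}
            * (n.factorial * 2 ^ n) ^ (k + 1) : ℕ) : ℂ) := by push_cast; ring
    _ = (Nat.card {σs : Fin (k + 1) → Gp n // Econd n k mus dl σs} : ℂ) := by
          rw [hcard1]
    _ = ((n.factorial * 2 ^ n : ℕ) : ℂ) * aco lamP := hcard2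

end
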